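/- arXiv:2107.01029 — 3 statements merged into one kernel-verified Lean document; each statement's English description precedes it below -/
import Mathlib

section
/- The expected number of flips of a fair coin until HH first appears is 6 with variance 22: ∑_{n=1}^∞ n · a_HH(n) · (1/2)^n = 6, and ∑_{n=1}^∞ n² · a_HH(n) · (1/2)^n − 6² = 22 (so the standard deviation is √22); in particular both series converge. -/
/-!
A toss sequence in which HH first appears at the end starts either with T or with HT, followed in
both cases by a shorter sequence of the same kind (only HH itself starts with HH). Hence
`a_HH(n) = F(n - 1)`. By Binet's formula the two moment series split into the series
`∑ n^k (a/2)^n` for the roots `a = φ, ψ` of `a² = a + 1`; since `1 - a/2 = 1/(2a²)` for such `a`,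
these sum to polynomials in `a`, which Binet's formula recombines into `2 F(4) = 6` and
`4 F(6) + 2 F(7) = 58 = 22 + 6²`.
-/

/-- The number of binary sequences (lists of Booleans, `true` = H, `false` = T) of
length `n` in which the word `W` appears for the first time exactly at the end:
`W` is a suffix of `l` and `W` does not occur as a contiguous sublist of `l` with
its last entry removed. -/
noncomputable def firstCount (W : List Bool) (n : ℕ) : ℕ :=
  Nat.card {l : List Bool // l.length = n ∧ W <:+ l ∧ ¬ (W <:+: l.dropLast)}

open List Real goldenRatio

def firstOccurrences (W : List Bool) (n : ℕ) : Set (List Bool) :=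
  {l | l.length = n ∧ W <:+ l ∧ ¬ W <:+: l.dropLast}

theorem firstCount_eq_ncard (W : List Bool) (n : ℕ) :
    firstCount W n = (firstOccurrences W n).ncard :=
  Nat.card_coe_set_eq _

theorem length_le_of_mem_firstOccurrences {W l : List Bool} {n : ℕ}
    (h : l ∈ firstOccurrences W n) : W.length ≤ n :=
  h.1 ▸ h.2.1.length_le

theorem firstOccurrences_finite (W : List Bool) (n : ℕ) : (firstOccurrences W n).Finite :=
  (List.finite_length_eq Bool n).subset fun _ h => h.1

theorem firstOccurrences_eq_empty_of_lt_length {W : List Bool} {n : ℕ} (h : n < W.length) :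
    firstOccurrences W n = ∅ :=
  Set.eq_empty_of_forall_notMem fun _ hl => (length_le_of_mem_firstOccurrences hl).not_gt h

theorem firstOccurrences_length {W : List Bool} (hW : W ≠ []) :
    firstOccurrences W W.length = {W} := by
  ext l
  constructor
  · rintro ⟨hlen, hsuf, -⟩
    exact (hsuf.eq_of_length hlen.symm).symm
  · rintro rfl
    refine ⟨rfl, suffix_refl l, fun h => ?_⟩
    have := h.length_le
    rw [length_dropLast] at this
    exact hW (length_eq_zero_iff.mp (by omega))

section

local notation "HH" => [true, true]

theorem cons_false_mem_firstOccurrences_HH {l : List Bool} {n : ℕ} :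
    false :: l ∈ firstOccurrences HH (n + 1) ↔ l ∈ firstOccurrences HH n := by
  rcases eq_or_ne l [] with rfl | hl
  · simp [firstOccurrences, suffix_cons_iff]
  · simp [firstOccurrences, suffix_cons_iff, dropLast_cons_of_ne_nil hl,
      infix_cons_iff]

theorem cons_true_false_mem_firstOccurrences_HH {l : List Bool} {n : ℕ} :
    true :: false :: l ∈ firstOccurrences HH (n + 2) ↔ l ∈ firstOccurrences HH n := by
  rcases eq_or_ne l [] with rfl | hl
  · simp [firstOccurrences, suffix_cons_iff]
  · simp [firstOccurrences, suffix_cons_iff, dropLast_cons_of_ne_nil hl,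
      infix_cons_iff]

theorem cons_true_true_notMem_firstOccurrences_HH (l : List Bool) (n : ℕ) :
    true :: true :: l ∉ firstOccurrences HH (n + 3) := by
  rintro ⟨hlen, -, hfirst⟩
  rcases l with _ | ⟨b, l⟩
  · simp at hlen
  · exact hfirst (by simp [infix_cons_iff])

theorem firstOccurrences_HH_add_three (n : ℕ) :
    firstOccurrences HH (n + 3) =
      (false :: ·) '' firstOccurrences HH (n + 2) ∪
        (fun l => true :: false :: l) '' firstOccurrences HH (n + 1) := by
  ext (_ | ⟨_ | _, l⟩)
  · simp [firstOccurrences]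
  · simp [cons_false_mem_firstOccurrences_HH]
  rcases l with _ | ⟨_ | _, l⟩
  · simp [firstOccurrences]
  · simp [cons_true_false_mem_firstOccurrences_HH]
  · simp [cons_true_true_notMem_firstOccurrences_HH]

theorem ncard_firstOccurrences_HH : ∀ n, (firstOccurrences HH n).ncard = Nat.fib (n - 1)
  | 0 | 1 => by rw [firstOccurrences_eq_empty_of_lt_length (by simp)]; simp
  | 2 => (congrArg Set.ncard (firstOccurrences_length (W := HH) (by simp))).trans
      (Set.ncard_singleton _)
  | n + 3 => by
    have hdisj : Disjoint ((false :: ·) '' firstOccurrences HH (n + 2))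
        ((fun l => true :: false :: l) '' firstOccurrences HH (n + 1)) :=
      Set.disjoint_left.2 (by rintro _ ⟨_, _, rfl⟩ ⟨_, _, h⟩; simp at h)
    rw [firstOccurrences_HH_add_three, Set.ncard_union_eq hdisj
        ((firstOccurrences_finite _ _).image _) ((firstOccurrences_finite _ _).image _),
      Set.ncard_image_of_injective _ cons_injective,
      Set.ncard_image_of_injective _ (fun _ _ h => by simpa using h),
      ncard_firstOccurrences_HH (n + 2), ncard_firstOccurrences_HH (n + 1), add_comm]
    exact Nat.fib_add_two.symm

end

theorem firstCount_HH (n : ℕ) : firstCount [true, true] n = Nat.fib (n - 1) := by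
  rw [firstCount_eq_ncard, ncard_firstOccurrences_HH]

theorem hasSum_sq_mul_geometric_of_norm_lt_one {𝕜 : Type*} [NormedField 𝕜] {r : 𝕜}
    (hr : ‖r‖ < 1) : HasSum (fun n : ℕ => (n : 𝕜) ^ 2 * r ^ n) (r * (1 + r) / (1 - r) ^ 3) := by
  have hr1 : 1 - r ≠ 0 := sub_ne_zero.2 (fun h => by simp [← h] at hr)
  have hsplit (n : ℕ) : (n : 𝕜) ^ 2 * r ^ n =
      2 * ((n + 2).choose 2 * r ^ n) - 3 * (n * r ^ n) - 2 * r ^ n := by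
    have hchoose : (n + 2).choose 2 * 2 = (n + 2) * (n + 1) := by
      rw [← Nat.add_one_mul_choose_eq, Nat.choose_one_right]
    have := congrArg (Nat.cast : ℕ → 𝕜) hchoose
    push_cast at this
    linear_combination (-r ^ n) * this
  have hval : r * (1 + r) / (1 - r) ^ 3 =
      2 * (1 / (1 - r) ^ (2 + 1)) - 3 * (r / (1 - r) ^ 2) - 2 * (1 - r)⁻¹ := by
    field_simp
    ring
  rw [hval]
  exact ((((hasSum_choose_mul_geometric_of_norm_lt_one 2 hr).mul_left 2).sub
    ((hasSum_coe_mul_geometric_of_norm_lt_one hr).mul_left 3)).sub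
    ((hasSum_geometric_of_norm_lt_one hr).mul_left 2)).congr_fun hsplit

theorem hasSum_mul_fib_pred_mul_pow {w : ℕ → ℝ} (hw : w 0 = 0) {y A B : ℝ}
    (hA : HasSum (fun n => w n * (φ / y) ^ n) A) (hB : HasSum (fun n => w n * (ψ / y) ^ n) B) :
    HasSum (fun n => w n * Nat.fib (n - 1) * (1 / y) ^ n) ((A / φ - B / ψ) / √5) := by
  refine (((hA.div_const φ).sub (hB.div_const ψ)).div_const √5).congr_fun fun n => ?_
  rcases n with _ | n
  · simp [hw]
  · have hφ := goldenRatio_ne_zero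
    have hψ := goldenConj_ne_zero
    rw [Nat.add_sub_cancel, coe_fib_eq]
    -- `φ` and `ψ` are reducible abbreviations, which `field_simp` would otherwise unfold
    generalize φ = a at *
    generalize ψ = b at *
    field_simp
    ring

theorem binet_succ_div_eq_fib (k : ℕ) : (φ ^ (k + 1) / φ - ψ ^ (k + 1) / ψ) / √5 = Nat.fib k := by
  rw [coe_fib_eq, pow_succ, pow_succ, mul_div_cancel_right₀ _ goldenRatio_ne_zero,
    mul_div_cancel_right₀ _ goldenConj_ne_zero]

section

variable {a : ℝ}

theorem ne_zero_of_sq_eq_add_one (ha : a ^ 2 = a + 1) : a ≠ 0 := by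
  rintro rfl
  norm_num at ha

theorem one_sub_half_eq_of_sq_eq_add_one (ha : a ^ 2 = a + 1) : 1 - a / 2 = 1 / (2 * a ^ 2) := by
  have := ne_zero_of_sq_eq_add_one ha
  field_simp
  linear_combination (1 - a) * ha

theorem norm_half_lt_one_of_sq_eq_add_one (ha : a ^ 2 = a + 1) : ‖a / 2‖ < 1 := by
  rw [Real.norm_eq_abs, abs_lt]
  constructor <;> nlinarith

theorem hasSum_coe_mul_half_pow_of_sq_eq_add_one (ha : a ^ 2 = a + 1) :
    HasSum (fun n : ℕ => (n : ℝ) * (a / 2) ^ n) (2 * a ^ 5) := by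
  have := ne_zero_of_sq_eq_add_one ha
  have h := hasSum_coe_mul_geometric_of_norm_lt_one (norm_half_lt_one_of_sq_eq_add_one ha)
  rwa [one_sub_half_eq_of_sq_eq_add_one ha,
    show a / 2 / (1 / (2 * a ^ 2)) ^ 2 = 2 * a ^ 5 by field_simp] at h

theorem hasSum_sq_mul_half_pow_of_sq_eq_add_one (ha : a ^ 2 = a + 1) :
    HasSum (fun n : ℕ => (n : ℝ) ^ 2 * (a / 2) ^ n) (4 * a ^ 7 + 2 * a ^ 8) := by
  have := ne_zero_of_sq_eq_add_one ha
  have h := hasSum_sq_mul_geometric_of_norm_lt_one (norm_half_lt_one_of_sq_eq_add_one ha)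
  rwa [one_sub_half_eq_of_sq_eq_add_one ha,
    show a / 2 * (1 + a / 2) / (1 / (2 * a ^ 2)) ^ 3 = 4 * a ^ 7 + 2 * a ^ 8 by
      field_simp; ring] at h

end

theorem hasSum_coe_mul_fib_pred_mul_half_pow :
    HasSum (fun n : ℕ => (n : ℝ) * Nat.fib (n - 1) * (1 / 2) ^ n) 6 := by
  convert hasSum_mul_fib_pred_mul_pow (w := fun n => (n : ℝ)) Nat.cast_zero
    (hasSum_coe_mul_half_pow_of_sq_eq_add_one goldenRatio_sq)
    (hasSum_coe_mul_half_pow_of_sq_eq_add_one goldenConj_sq) using 1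
  rw [show (2 * φ ^ 5 / φ - 2 * ψ ^ 5 / ψ) / √5 = 2 * ((φ ^ 5 / φ - ψ ^ 5 / ψ) / √5) by ring,
    binet_succ_div_eq_fib]
  norm_num

theorem hasSum_sq_mul_fib_pred_mul_half_pow :
    HasSum (fun n : ℕ => (n : ℝ) ^ 2 * Nat.fib (n - 1) * (1 / 2) ^ n) 58 := by
  convert hasSum_mul_fib_pred_mul_pow (w := fun n => (n : ℝ) ^ 2) (by simp)
    (hasSum_sq_mul_half_pow_of_sq_eq_add_one goldenRatio_sq)
    (hasSum_sq_mul_half_pow_of_sq_eq_add_one goldenConj_sq) using 1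
  rw [show ((4 * φ ^ 7 + 2 * φ ^ 8) / φ - (4 * ψ ^ 7 + 2 * ψ ^ 8) / ψ) / √5 =
      4 * ((φ ^ 7 / φ - ψ ^ 7 / ψ) / √5) + 2 * ((φ ^ 8 / φ - ψ ^ 8 / ψ) / √5) by ring,
    binet_succ_div_eq_fib, binet_succ_div_eq_fib]
  norm_num

theorem stmt_6 :
    Summable (fun n : ℕ => (n : ℝ) * (firstCount [true, true] n : ℝ) * (1 / 2) ^ n) ∧
    ∑' n : ℕ, (n : ℝ) * (firstCount [true, true] n : ℝ) * (1 / 2) ^ n = 6 ∧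
    Summable (fun n : ℕ => (n : ℝ) ^ 2 * (firstCount [true, true] n : ℝ) * (1 / 2) ^ n) ∧
    (∑' n : ℕ, (n : ℝ) ^ 2 * (firstCount [true, true] n : ℝ) * (1 / 2) ^ n) - 6 ^ 2 = 22 := by
  have hmean := hasSum_coe_mul_fib_pred_mul_half_pow
  have hsq := hasSum_sq_mul_fib_pred_mul_half_pow
  simp only [firstCount_HH]
  exact ⟨hmean.summable, hmean.tsum_eq, hsq.summable, by rw [hsq.tsum_eq]; norm_num⟩
end

section
/- For all n ≥ 1, a_HTT(n) = a_HHT(n); i.e., the words HTT and HHT have the same number of length-n binary sequences in which they first appear at position n. -/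
namespace List

variable {α β : Type*}

def Unbordered (W : List α) : Prop :=
  ∀ u, u <+: W → u <:+ W → u = [] ∨ u = W

theorem Unbordered.infix_dropLast_append_iff {W : List α} (hW : W.Unbordered) (p : List α) :
    W <:+: (p ++ W).dropLast ↔ W <:+: p := by
  rcases eq_or_ne W [] with rfl | hW₀
  · simp
  rw [dropLast_append_of_ne_nil hW₀]
  refine ⟨fun h => ?_, infix_append_of_infix_left⟩
  rcases infix_append_iff_ne_nil.mp h with h | h | ⟨u, v, hu, hv, rfl, -, hvW⟩
  · exact h
  · exact absurd h.length_le (by simp [length_dropLast, length_pos_iff.mpr hW₀])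
  · rcases hW v (hvW.trans (dropLast_prefix _)) (suffix_append u v) with rfl | hvuv
    · exact absurd rfl hv
    · exact absurd (self_eq_append_left.mp hvuv) hu

theorem unbordered_iff_forall_mem_tails {W : List α} :
    W.Unbordered ↔ ∀ u ∈ W.tails, u <+: W → u = [] ∨ u = W := by
  simp only [Unbordered, mem_tails]
  exact ⟨fun h u hs hp => h u hp hs, fun h u hp hs => h u hs hp⟩

noncomputable def avoidCount (W : List α) (m : ℕ) : ℕ :=
  Nat.card {p : List α // p.length = m ∧ ¬ W <:+: p}

theorem avoidCount_reverse (W : List α) (m : ℕ) : avoidCount W.reverse m = avoidCount W m :=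
  Nat.card_congr <| Equiv.subtypeEquiv ⟨reverse, reverse, reverse_reverse, reverse_reverse⟩
    fun p => by simp [← reverse_infix (l₁ := W.reverse)]

theorem avoidCount_map_equiv (e : α ≃ β) (W : List α) (m : ℕ) :
    avoidCount (W.map e) m = avoidCount W m :=
  (Nat.card_congr <| (Equiv.listEquivOfEquiv e).subtypeEquiv fun p => by
    simp [Equiv.listEquivOfEquiv, infix_map_iff, (map_injective_iff.mpr e.injective).eq_iff]).symm

end List

open List

theorem firstCount_add_length {W : List Bool} (hW : W.Unbordered) (m : ℕ) :
    firstCount W (m + W.length) = avoidCount W m := by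
  let appendW (p : {p : List Bool // p.length = m ∧ ¬ W <:+: p}) :
      {l : List Bool // l.length = m + W.length ∧ W <:+ l ∧ ¬ W <:+: l.dropLast} :=
    ⟨p.1 ++ W, by simp [p.2.1], suffix_append _ _, (hW.infix_dropLast_append_iff _).not.mpr p.2.2⟩
  refine (Nat.card_congr (Equiv.ofBijective appendW ⟨fun p q hpq => ?_, fun l => ?_⟩)).symm
  · exact Subtype.ext (append_cancel_right (congrArg Subtype.val hpq))
  · obtain ⟨l, hl, ⟨p, rfl⟩, hp⟩ := l
    refine ⟨⟨p, by simpa using hl, (hW.infix_dropLast_append_iff _).not.mp hp⟩, rfl⟩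

theorem firstCount_eq_zero_of_lt {W : List Bool} {n : ℕ} (hn : n < W.length) :
    firstCount W n = 0 :=
  have : IsEmpty {l : List Bool // l.length = n ∧ W <:+ l ∧ ¬ W <:+: l.dropLast} :=
    ⟨fun ⟨_, hl, hWl, _⟩ => absurd (hl ▸ hWl.length_le) (not_le.mpr hn)⟩
  Nat.card_of_isEmpty

theorem unbordered_HTT : [true, false, false].Unbordered :=
  unbordered_iff_forall_mem_tails.mpr (by decide)

theorem unbordered_HHT : [true, true, false].Unbordered :=
  unbordered_iff_forall_mem_tails.mpr (by decide)

theorem stmt_11 :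
    ∀ n : ℕ, 1 ≤ n → firstCount [true, false, false] n = firstCount [true, true, false] n := by
  intro n _
  rcases lt_or_ge n 3 with hn | hn
  · rw [firstCount_eq_zero_of_lt hn, firstCount_eq_zero_of_lt hn]
  · obtain ⟨m, rfl⟩ := Nat.exists_eq_add_of_le' hn
    calc firstCount [true, false, false] (m + 3)
        = avoidCount [true, false, false] m := firstCount_add_length unbordered_HTT m
      _ = avoidCount ([true, false, false].map Equiv.boolNot).reverse m := by
        rw [avoidCount_reverse, avoidCount_map_equiv]
      _ = firstCount [true, true, false] (m + 3) := (firstCount_add_length unbordered_HHT m).symm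
end

section
/- a_HTH(1) = a_HTH(2) = 0, a_HTH(3) = 1, and for all n ≥ 1, a_HTH(n+3) = 2·a_HTH(n+2) − a_HTH(n+1) + a_HTH(n). -/
section LengthCount

variable {α : Type*}

noncomputable def lengthCount (P : List α → Prop) (n : ℕ) : ℕ :=
  Nat.card {l : List α // l.length = n ∧ P l}

instance [Finite α] (P : List α → Prop) (n : ℕ) : Finite {l : List α // l.length = n ∧ P l} :=
  Set.Finite.to_subtype (s := {l : List α | l.length = n ∧ P l}) <|
    (List.finite_length_eq α n).subset fun _ hl => hl.1

@[simp]
theorem lengthCount_false (n : ℕ) : lengthCount (fun _ : List α => False) n = 0 := by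
  simp [lengthCount]

theorem lengthCount_zero (P : List α → Prop) [Decidable (P [])] :
    lengthCount P 0 = if P [] then 1 else 0 := by
  split_ifs with h
  · exact Nat.card_eq_one_iff_exists.2
      ⟨⟨[], rfl, h⟩, fun l => Subtype.ext (List.length_eq_zero_iff.1 l.2.1)⟩
  · have : IsEmpty {l : List α // l.length = 0 ∧ P l} :=
      ⟨fun l => h (List.length_eq_zero_iff.1 l.2.1 ▸ l.2.2)⟩
    exact Nat.card_of_isEmpty

theorem lengthCount_succ [Fintype α] (P : List α → Prop) (n : ℕ) :
    lengthCount P (n + 1) = ∑ a, lengthCount (fun l => P (a :: l)) n := by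
  simp only [lengthCount]
  rw [← Nat.card_sigma]
  refine Nat.card_congr
    { toFun := fun l => ⟨l.1.head (List.ne_nil_of_length_eq_add_one l.2.1), l.1.tail, ?_, ?_⟩
      invFun := fun l => ⟨l.1 :: l.2.1, by simp [l.2.2.1], l.2.2.2⟩
      left_inv := fun l => Subtype.ext (List.cons_head_tail _)
      right_inv := fun l => rfl }
  · simp [l.2.1]
  · simpa using l.2.2

theorem lengthCount_and_add_not_and [Finite α] (P Q : List α → Prop) (n : ℕ) :
    lengthCount (fun l => Q l ∧ P l) n + lengthCount (fun l => ¬ Q l ∧ P l) n =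
      lengthCount P n := by
  classical
  rw [lengthCount, lengthCount, lengthCount, ← Nat.card_sum]
  refine Nat.card_congr <| (Equiv.sumCongr ?_ ?_).trans
    (Equiv.sumCompl fun l : {l // l.length = n ∧ P l} => Q l.1)
  · exact ((Equiv.subtypeSubtypeEquivSubtypeInter (fun l : List α => l.length = n ∧ P l) Q).trans
      (Equiv.subtypeEquivRight fun l => by tauto)).symm
  · exact ((Equiv.subtypeSubtypeEquivSubtypeInter (fun l : List α => l.length = n ∧ P l)
      fun l => ¬ Q l).trans (Equiv.subtypeEquivRight fun l => by tauto)).symm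

theorem lengthCount_comp_reverse (P : List α → Prop) (n : ℕ) :
    lengthCount (fun l => P l.reverse) n = lengthCount P n :=
  Nat.card_congr <| Equiv.subtypeEquiv (List.reverse_involutive.toPerm _) fun l => by simp

theorem firstCount_eq_lengthCount (W : List Bool) (n : ℕ) :
    firstCount W n = lengthCount (fun l => W.reverse <+: l ∧ ¬ W.reverse <:+: l.tail) n := by
  rw [← lengthCount_comp_reverse]
  simp only [List.reverse_prefix, List.tail_reverse, List.reverse_infix]
  rfl

end LengthCount

section HeadTailHead

local notation "HTH" => [true, false, true]

/-- Lists are read backwards: `[false, true] <+: l` says that the coin sequence ends in HT. -/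
noncomputable def avoidCount (P : List Bool → Prop) (n : ℕ) : ℕ :=
  lengthCount (fun l => P l ∧ ¬ HTH <:+: l) n

theorem firstCount_HTH_succ (n : ℕ) :
    firstCount HTH (n + 1) = avoidCount ([false, true] <+: ·) n := by
  rw [firstCount_eq_lengthCount, lengthCount_succ, Fintype.sum_bool]
  simp [avoidCount, List.cons_prefix_cons]

theorem avoidCount_prefix_false_true_succ (n : ℕ) :
    avoidCount ([false, true] <+: ·) (n + 1) = avoidCount ([true] <+: ·) n := by
  rw [avoidCount, lengthCount_succ, Fintype.sum_bool]
  simp [avoidCount, List.cons_prefix_cons, List.infix_cons_iff]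

theorem avoidCount_prefix_true_succ (n : ℕ) :
    avoidCount ([true] <+: ·) (n + 1) = avoidCount (¬ [false, true] <+: ·) n := by
  rw [avoidCount, lengthCount_succ, Fintype.sum_bool]
  simp [avoidCount, List.cons_prefix_cons, List.infix_cons_iff]

theorem lengthCount_not_infix_HTH_succ (n : ℕ) :
    lengthCount (¬ HTH <:+: ·) (n + 1) =
      lengthCount (¬ HTH <:+: ·) n + avoidCount (¬ [false, true] <+: ·) n := by
  rw [lengthCount_succ, Fintype.sum_bool, add_comm]
  simp [avoidCount, List.cons_prefix_cons, List.infix_cons_iff]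

theorem avoidCount_add_avoidCount_not (Q : List Bool → Prop) (n : ℕ) :
    avoidCount Q n + avoidCount (¬ Q ·) n = lengthCount (¬ HTH <:+: ·) n :=
  lengthCount_and_add_not_and _ Q n

theorem firstCount_HTH_add_four (n : ℕ) :
    firstCount HTH (n + 4) + firstCount HTH (n + 2) =
      2 * firstCount HTH (n + 3) + firstCount HTH (n + 1) := by
  simp only [firstCount_HTH_succ]
  set B := avoidCount (¬ [false, true] <+: ·)
  have htwo (m : ℕ) : avoidCount ([false, true] <+: ·) (m + 2) = B m := by
    rw [avoidCount_prefix_false_true_succ, avoidCount_prefix_true_succ]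
  calc _ = avoidCount ([false, true] <+: ·) (n + 1) + B (n + 1) := by rw [htwo, add_comm]
    _ = lengthCount (¬ HTH <:+: ·) (n + 1) := avoidCount_add_avoidCount_not _ _
    _ = avoidCount ([false, true] <+: ·) n + B n + B n := by
      rw [lengthCount_not_infix_HTH_succ, ← avoidCount_add_avoidCount_not]
    _ = _ := by rw [htwo]; ring

end HeadTailHead

theorem stmt_12 :
    firstCount [true, false, true] 1 = 0 ∧ firstCount [true, false, true] 2 = 0 ∧
    firstCount [true, false, true] 3 = 1 ∧
    ∀ n : ℕ, 1 ≤ n →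
      (firstCount [true, false, true] (n + 3) : ℤ)
        = 2 * (firstCount [true, false, true] (n + 2) : ℤ)
          - (firstCount [true, false, true] (n + 1) : ℤ)
          + (firstCount [true, false, true] n : ℤ) := by
  refine ⟨?_, ?_, ?_, fun n hn => ?_⟩
  · rw [firstCount_HTH_succ 0]
    simp [avoidCount, lengthCount_zero]
  · rw [firstCount_HTH_succ 1, avoidCount_prefix_false_true_succ 0]
    simp [avoidCount, lengthCount_zero]
  · rw [firstCount_HTH_succ 2, avoidCount_prefix_false_true_succ 1, avoidCount_prefix_true_succ 0]
    simp [avoidCount, lengthCount_zero]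
  · obtain ⟨m, rfl⟩ : ∃ m, n = m + 1 := ⟨n - 1, by omega⟩
    have := firstCount_HTH_add_four m
    simp only [add_assoc, Nat.reduceAdd]
    omega
end
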